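/- Let o ∈ [0,1]^d, z its rounding, p ≥ 1, σ a certainty-sorting permutation, and α ≥ 0. If t ∈ {1,…,d} satisfies ‖o − flip(z,{σ(1),…,σ(t)})‖_p > α, then the prediction set {Y ∈ {0,1}^d : ‖o − Y‖_p ≤ α} has cardinality at most Σ_{j=0}^{t−1} C(d, j), since it is contained in the Hamming ball of radius t − 1 around z. -/

import Mathlib

noncomputable def lpN {d : ℕ} (p : ℝ) (v : Fin d → ℝ) : ℝ :=
  (∑ k, |v k| ^ p) ^ (1 / p)

noncomputable def rnd {d : ℕ} (o : Fin d → ℝ) : Fin d → ℝ :=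
  fun k => if (0.5 : ℝ) ≤ o k then 1 else 0

noncomputable def flipSet {d : ℕ} (z : Fin d → ℝ) (S : Finset (Fin d)) : Fin d → ℝ :=
  fun k => if k ∈ S then 1 - z k else z k

def firstIdx {d : ℕ} (σ : Equiv.Perm (Fin d)) (ν : ℕ) : Finset (Fin d) :=
  (Finset.univ.filter (fun i : Fin d => (i : ℕ) < ν)).image σ

/-- real-valued binary vector associated with a boolean vector -/
noncomputable def toReal {d : ℕ} (b : Fin d → Bool) : Fin d → ℝ :=
  fun k => if b k then 1 else 0

noncomputable def hamming {d : ℕ} (Y z : Fin d → ℝ) : ℕ :=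
  (Finset.univ.filter (fun k : Fin d => Y k ≠ z k)).card


/-! Every binary vector `Y` is the flip of the rounding `z` on the set where they disagree, and
flipping coordinate `k` adds `(1/2 + uₖ)^p - (1/2 - uₖ)^p ≥ 0` to `‖o - ·‖_p^p`, an amount
increasing in `uₖ`. Hence among all flips of at least `t` coordinates, flipping the `t` least
certain ones is closest to `o`; so a `Y` within distance `α` of `o` differs from `z` in fewer
than `t` places, and the Hamming ball of radius `t - 1` has `∑_{j<t} C(d, j)` points. -/

lemma mem_firstIdx {d : ℕ} {σ : Equiv.Perm (Fin d)} {ν : ℕ} {a : Fin d} :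
    a ∈ firstIdx σ ν ↔ (σ.symm a : ℕ) < ν := by
  simp only [firstIdx, Finset.mem_image, Finset.mem_filter, Finset.mem_univ, true_and]
  exact ⟨by rintro ⟨i, hi, rfl⟩; simpa using hi, fun h => ⟨σ.symm a, h, σ.apply_symm_apply a⟩⟩

lemma card_firstIdx_le {d : ℕ} (σ : Equiv.Perm (Fin d)) (ν : ℕ) : (firstIdx σ ν).card ≤ ν :=
  calc (firstIdx σ ν).card
      _ ≤ (Finset.univ.filter (fun i : Fin d => (i : ℕ) < ν)).card := Finset.card_image_le
      _ ≤ (Finset.range ν).card :=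
        Finset.card_le_card_of_injOn Fin.val (fun i hi => by simpa using hi) Fin.val_injective.injOn
      _ = ν := Finset.card_range ν

/-- Exchange argument: `T \ S` is matched by at least as many elements of `S \ T`, none of
which has a smaller value. -/
theorem Finset.sum_le_sum_of_card_le_of_forall_le {ι M : Type*} [AddCommMonoid M]
    [LinearOrder M] [IsOrderedAddMonoid M] {g : ι → M} {S T : Finset ι} (hg : ∀ a ∈ S, 0 ≤ g a)
    (hcard : T.card ≤ S.card) (hT : ∀ a ∉ T, ∀ b ∈ T, g b ≤ g a) :
    ∑ k ∈ T, g k ≤ ∑ k ∈ S, g k := by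
  classical
  have hsdiff : (T \ S).card ≤ (S \ T).card := Finset.card_sdiff_le_card_sdiff_iff.mpr hcard
  have hexchange : ∑ k ∈ T \ S, g k ≤ ∑ k ∈ S \ T, g k := by
    rcases (S \ T).eq_empty_or_nonempty with hST | hST
    · rw [hST, Finset.card_empty, Nat.le_zero, Finset.card_eq_zero] at hsdiff
      simp [hST, hsdiff]
    obtain ⟨a, ha, ha_min⟩ := (S \ T).exists_min_image g hST
    rw [Finset.mem_sdiff] at ha
    calc ∑ k ∈ T \ S, g k
        _ ≤ (T \ S).card • g a :=
          Finset.sum_le_card_nsmul _ _ _ fun b hb => hT a ha.2 b (Finset.mem_sdiff.mp hb).1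
        _ ≤ (S \ T).card • g a := nsmul_le_nsmul_left (hg a ha.1) hsdiff
        _ ≤ ∑ k ∈ S \ T, g k := Finset.card_nsmul_le_sum _ _ _ ha_min
  rw [← Finset.sum_inter_add_sum_sdiff T S, ← Finset.sum_inter_add_sum_sdiff S T,
    Finset.inter_comm]
  gcongr

lemma sum_abs_sub_flipSet {d : ℕ} (p : ℝ) (o z : Fin d → ℝ) (S : Finset (Fin d)) :
    ∑ k, |o k - flipSet z S k| ^ p =
      ∑ k, |o k - z k| ^ p + ∑ k ∈ S, (|o k - (1 - z k)| ^ p - |o k - z k| ^ p) := by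
  rw [← Finset.univ_inter S, ← Finset.sum_ite_mem, ← Finset.sum_add_distrib]
  refine Finset.sum_congr rfl fun k _ => ?_
  by_cases hk : k ∈ S <;> simp [flipSet, hk]

lemma abs_sub_rnd {d : ℕ} {o : Fin d → ℝ} {k : Fin d} (hk : o k ∈ Set.Icc (0 : ℝ) 1) :
    |o k - rnd o k| = 0.5 - |o k - 0.5| ∧ |o k - (1 - rnd o k)| = 0.5 + |o k - 0.5| := by
  obtain ⟨h0, h1⟩ := hk
  by_cases h : (0.5 : ℝ) ≤ o k
  · simp only [rnd, if_pos h]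
    rw [abs_of_nonpos (by linarith), abs_of_nonneg (by linarith), abs_of_nonneg (by linarith)]
    constructor <;> ring
  · simp only [rnd, if_neg h]
    rw [abs_of_nonneg (by linarith), abs_of_nonpos (by linarith), abs_of_nonpos (by linarith)]
    constructor <;> ring

lemma rpow_add_sub_rpow_sub_mono {p a u v : ℝ} (hp : 0 ≤ p) (hu : 0 ≤ u) (huv : u ≤ v)
    (hv : v ≤ a) : (a + u) ^ p - (a - u) ^ p ≤ (a + v) ^ p - (a - v) ^ p := by
  have hplus : (a + u) ^ p ≤ (a + v) ^ p :=
    Real.rpow_le_rpow (by linarith) (by linarith) hp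
  have hminus : (a - v) ^ p ≤ (a - u) ^ p :=
    Real.rpow_le_rpow (by linarith) (by linarith) hp
  linarith

lemma lpN_sub_flipSet_firstIdx_le {d : ℕ} {p : ℝ} (hp : 0 ≤ p) {o : Fin d → ℝ}
    (ho : ∀ k, o k ∈ Set.Icc (0 : ℝ) 1) {σ : Equiv.Perm (Fin d)}
    (hσ : ∀ i j : Fin d, i ≤ j → |o (σ i) - 0.5| ≤ |o (σ j) - 0.5|)
    {ν : ℕ} {S : Finset (Fin d)} (hS : ν ≤ S.card) :
    lpN p (fun k => o k - flipSet (rnd o) (firstIdx σ ν) k) ≤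
      lpN p (fun k => o k - flipSet (rnd o) S k) := by
  set gain : Fin d → ℝ := fun k => |o k - (1 - rnd o k)| ^ p - |o k - rnd o k| ^ p
  have hgain : ∀ k, gain k = (0.5 + |o k - 0.5|) ^ p - (0.5 - |o k - 0.5|) ^ p := fun k => by
    simp only [gain, (abs_sub_rnd (ho k)).1, (abs_sub_rnd (ho k)).2]
  have hcert : ∀ k, |o k - 0.5| ≤ 0.5 := fun k =>
    abs_le.mpr ⟨by linarith [(ho k).1], by linarith [(ho k).2]⟩
  have hgain_nonneg : ∀ k, 0 ≤ gain k := fun k => by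
    simpa [hgain] using rpow_add_sub_rpow_sub_mono hp le_rfl (abs_nonneg (o k - 0.5)) (hcert k)
  have hgain_mono : ∀ k l, |o k - 0.5| ≤ |o l - 0.5| → gain k ≤ gain l := fun k l h => by
    rw [hgain, hgain]
    exact rpow_add_sub_rpow_sub_mono hp (abs_nonneg _) h (hcert l)
  have hsum : ∑ k ∈ firstIdx σ ν, gain k ≤ ∑ k ∈ S, gain k := by
    refine Finset.sum_le_sum_of_card_le_of_forall_le (fun a _ => hgain_nonneg a)
      ((card_firstIdx_le σ ν).trans hS) fun a ha b hb => ?_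
    rw [mem_firstIdx] at ha hb
    simpa using hgain_mono _ _ (hσ (σ.symm b) (σ.symm a) (by rw [Fin.le_def]; omega))
  refine Real.rpow_le_rpow (Finset.sum_nonneg fun k _ => by positivity) ?_ (by positivity)
  rw [sum_abs_sub_flipSet, sum_abs_sub_flipSet]
  gcongr

lemma toReal_eq_zero_or_one {d : ℕ} (b : Fin d → Bool) (k : Fin d) :
    toReal b k = 0 ∨ toReal b k = 1 := by
  cases hb : b k <;> simp [toReal, hb]

lemma rnd_eq_zero_or_one {d : ℕ} (o : Fin d → ℝ) (k : Fin d) : rnd o k = 0 ∨ rnd o k = 1 := by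
  by_cases h : (0.5 : ℝ) ≤ o k <;> simp [rnd, h]

lemma toReal_injective {d : ℕ} : Function.Injective (toReal (d := d)) := by
  intro b b' h
  funext k
  have hk := congrFun h k
  cases hb : b k <;> cases hb' : b' k <;> simp_all [toReal]

lemma eq_flipSet_of_eq_zero_or_one {d : ℕ} {Y z : Fin d → ℝ} (hY : ∀ k, Y k = 0 ∨ Y k = 1)
    (hz : ∀ k, z k = 0 ∨ z k = 1) :
    Y = flipSet z (Finset.univ.filter fun k => Y k ≠ z k) := by
  funext k
  rcases hY k with hYk | hYk <;> rcases hz k with hzk | hzk <;> norm_num [flipSet, hYk, hzk]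

lemma card_filter_hamming_le {d : ℕ} {z : Fin d → ℝ} (hz : ∀ k, z k = 0 ∨ z k = 1) (r : ℕ) :
    (Finset.univ.filter fun b : Fin d → Bool => hamming (toReal b) z ≤ r).card ≤
      ∑ j ∈ Finset.range (r + 1), d.choose j := by
  let diff : (Fin d → Bool) → Finset (Fin d) :=
    fun b => Finset.univ.filter fun k => toReal b k ≠ z k
  have hdiff : Function.Injective diff := fun b b' h => toReal_injective <| by
    rw [eq_flipSet_of_eq_zero_or_one (toReal_eq_zero_or_one b) hz,
      eq_flipSet_of_eq_zero_or_one (toReal_eq_zero_or_one b') hz]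
    exact congrArg (flipSet z) h
  calc _ ≤ ((Finset.range (r + 1)).biUnion (Finset.powersetCard · Finset.univ)).card := by
        refine Finset.card_le_card_of_injOn diff (fun b hb => ?_) hdiff.injOn
        have hb : (diff b).card ≤ r := (Finset.mem_filter.mp hb).2
        simp only [Finset.coe_biUnion, Finset.coe_range, Set.mem_iUnion, Finset.mem_coe,
          Finset.mem_powersetCard, Finset.subset_univ, true_and]
        exact ⟨(diff b).card, Set.mem_Iio.mpr (Nat.lt_succ_of_le hb), rfl⟩
    _ ≤ ∑ j ∈ Finset.range (r + 1), (Finset.powersetCard j Finset.univ).card :=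
        Finset.card_biUnion_le
    _ = ∑ j ∈ Finset.range (r + 1), d.choose j := by simp [Finset.card_powersetCard]

lemma filter_lpN_le_subset_filter_hamming_le {d : ℕ} {p : ℝ} (hp : 0 ≤ p) {o : Fin d → ℝ}
    (ho : ∀ k, o k ∈ Set.Icc (0 : ℝ) 1) {σ : Equiv.Perm (Fin d)}
    (hσ : ∀ i j : Fin d, i ≤ j → |o (σ i) - 0.5| ≤ |o (σ j) - 0.5|) {α : ℝ} {t : ℕ}
    (ht : α < lpN p (fun k => o k - flipSet (rnd o) (firstIdx σ t) k)) :
    (Finset.univ.filter fun b : Fin d → Bool => lpN p (fun k => o k - toReal b k) ≤ α) ⊆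
      Finset.univ.filter fun b : Fin d → Bool => hamming (toReal b) (rnd o) ≤ t - 1 := by
  intro b hb
  simp only [Finset.mem_filter, Finset.mem_univ, true_and] at hb ⊢
  by_contra! hfar
  have hflip := lpN_sub_flipSet_firstIdx_le hp ho hσ (ν := t)
    (S := Finset.univ.filter fun k => toReal b k ≠ rnd o k) (by unfold hamming at hfar; omega)
  rw [← eq_flipSet_of_eq_zero_or_one (toReal_eq_zero_or_one b) (rnd_eq_zero_or_one o)] at hflip
  linarith

theorem stmt14_general {d : ℕ} (p : ℝ) (hp : 1 ≤ p)
    (o : Fin d → ℝ) (ho : ∀ k, o k ∈ Set.Icc (0 : ℝ) 1)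
    (σ : Equiv.Perm (Fin d))
    (hσ : ∀ i j : Fin d, i ≤ j → |o (σ i) - 0.5| ≤ |o (σ j) - 0.5|)
    (α : ℝ) (t : ℕ) (ht1 : 1 ≤ t)
    (ht : α < lpN p (fun k => o k - flipSet (rnd o) (firstIdx σ t) k)) :
    (Finset.univ.filter (fun b : Fin d → Bool =>
        lpN p (fun k => o k - toReal b k) ≤ α)) ⊆
      (Finset.univ.filter (fun b : Fin d → Bool =>
        hamming (toReal b) (rnd o) ≤ t - 1)) ∧
    (Finset.univ.filter (fun b : Fin d → Bool =>
        lpN p (fun k => o k - toReal b k) ≤ α)).card ≤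
      ∑ j ∈ Finset.range t, d.choose j := by
  have hsub := filter_lpN_le_subset_filter_hamming_le (by linarith) ho hσ ht
  refine ⟨hsub, (Finset.card_le_card hsub).trans ?_⟩
  simpa [Nat.sub_add_cancel ht1] using card_filter_hamming_le (rnd_eq_zero_or_one o) (t - 1)

theorem stmt14 {d : ℕ} (hd : 1 ≤ d) (p : ℝ) (hp : 1 ≤ p)
    (o : Fin d → ℝ) (ho : ∀ k, o k ∈ Set.Icc (0 : ℝ) 1)
    (σ : Equiv.Perm (Fin d))
    (hσ : ∀ i j : Fin d, i ≤ j → |o (σ i) - 0.5| ≤ |o (σ j) - 0.5|)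
    (α : ℝ) (hα : 0 ≤ α) (t : ℕ) (ht1 : 1 ≤ t) (htd : t ≤ d)
    (ht : α < lpN p (fun k => o k - flipSet (rnd o) (firstIdx σ t) k)) :
    (Finset.univ.filter (fun b : Fin d → Bool =>
        lpN p (fun k => o k - toReal b k) ≤ α)) ⊆
      (Finset.univ.filter (fun b : Fin d → Bool =>
        hamming (toReal b) (rnd o) ≤ t - 1)) ∧
    (Finset.univ.filter (fun b : Fin d → Bool =>
        lpN p (fun k => o k - toReal b k) ≤ α)).card ≤
      ∑ j ∈ Finset.range t, d.choose j :=
  stmt14_general p hp o ho σ hσ α t ht1 ht
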